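/- Let t_n denote the number of grand knight's paths of size n whose altitude is ≥ 0 (paths ending at a non-negative altitude). Then t_n is asymptotically equivalent to (√3/12)·(1+√3)^{n+1} as n → ∞. -/

import Mathlib

open Filter Topology

/-- A knight step: `N = (1,2)`, `Nb = (1,-2)`, `E = (2,1)`, `Eb = (2,-1)`. -/
inductive KStep : Type
  | N | Nb | E | Eb

/-- x-component of a step. -/
def KStep.dx : KStep → ℤ
  | .N => 1
  | .Nb => 1
  | .E => 2
  | .Eb => 2

/-- y-component of a step. -/
def KStep.dy : KStep → ℤ
  | .N => 2
  | .Nb => -2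
  | .E => 1
  | .Eb => -1

/-- The size of a path: the x-coordinate of its endpoint. -/
def pathSize (p : List KStep) : ℤ := (p.map KStep.dx).sum

/-- The altitude of a path: the y-coordinate of its endpoint. -/
def pathAlt (p : List KStep) : ℤ := (p.map KStep.dy).sum

/-- Zigzag condition: y-components of consecutive steps have opposite signs. -/
def IsZigzag (p : List KStep) : Prop :=
  List.Chain' (fun a b => a.dy * b.dy < 0) p

deriving instance DecidableEq for KStep

instance : Fintype KStep :=
  ⟨{.N, .Nb, .E, .Eb}, by intro x; cases x <;> simp⟩

namespace KP

lemma pathSize_cons (s : KStep) (p : List KStep) :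
    pathSize (s :: p) = s.dx + pathSize p := by simp [pathSize]

lemma pathAlt_cons (s : KStep) (p : List KStep) :
    pathAlt (s :: p) = s.dy + pathAlt p := by simp [pathAlt]

lemma one_le_dx (s : KStep) : 1 ≤ s.dx := by cases s <;> simp [KStep.dx]

lemma length_le_pathSize (p : List KStep) : (p.length : ℤ) ≤ pathSize p := by
  induction p with
  | nil => simp [pathSize]
  | cons s q ih =>
    rw [pathSize_cons]
    simp only [List.length_cons]
    push_cast
    have := one_le_dx s
    omega

/-- All lists of a given length. -/
def lenOf (k : ℕ) : Finset (List KStep) :=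
  Finset.univ.image (fun f : Fin k → KStep => List.ofFn f)

lemma mem_lenOf {k : ℕ} {l : List KStep} : l ∈ lenOf k ↔ l.length = k := by
  constructor
  · rintro h
    simp only [lenOf, Finset.mem_image] at h
    obtain ⟨f, -, rfl⟩ := h
    simp
  · intro h
    simp only [lenOf, Finset.mem_image]
    refine ⟨fun i => l.get (Fin.cast h.symm i), Finset.mem_univ _, ?_⟩
    apply List.ext_get (by simp [h])
    intro i h1 h2
    simp

/-- All paths of size `n`. -/
def P (n : ℕ) : Finset (List KStep) :=
  ((Finset.range (n + 1)).biUnion lenOf).filter (fun p => pathSize p = n)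

lemma mem_P {n : ℕ} {p : List KStep} : p ∈ P n ↔ pathSize p = n := by
  simp only [P, Finset.mem_filter, Finset.mem_biUnion, Finset.mem_range, mem_lenOf]
  constructor
  · tauto
  · intro h
    refine ⟨⟨p.length, ?_, rfl⟩, h⟩
    have := length_le_pathSize p
    omega

def g (n : ℕ) : ℕ := (P n).card

lemma g_zero : g 0 = 1 := by
  have : P 0 = {[]} := by
    ext p
    rw [mem_P]
    constructor
    · intro h
      have := length_le_pathSize p
      rw [h] at this
      simp only [Finset.mem_singleton]
      cases p with
      | nil => rfl
      | cons a q => simp at this; omega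
    · rintro h
      simp only [Finset.mem_singleton] at h
      subst h; simp [pathSize]
  rw [g, this]; simp

lemma g_one : g 1 = 2 := by
  have : P 1 = {[.N], [.Nb]} := by
    ext p
    rw [mem_P]
    constructor
    · intro h
      have hl := length_le_pathSize p
      rw [h] at hl
      match p with
      | [] => simp [pathSize] at h
      | [a] => cases a <;> simp_all [pathSize, KStep.dx]
      | a :: b :: q =>
        exfalso
        have h1 := one_le_dx a
        have h2 := one_le_dx b
        have h3 := length_le_pathSize q
        simp only [pathSize_cons] at h
        omega
    · intro h
      simp only [Finset.mem_insert, Finset.mem_singleton] at h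
      rcases h with rfl | rfl <;> simp [pathSize, KStep.dx]
  rw [g, this]
  simp

lemma P_succ_succ (n : ℕ) :
    P (n + 2) = ((P (n+1)).image (KStep.N :: ·) ∪ (P (n+1)).image (KStep.Nb :: ·)) ∪
      ((P n).image (KStep.E :: ·) ∪ (P n).image (KStep.Eb :: ·)) := by
  ext p
  simp only [Finset.mem_union, Finset.mem_image, mem_P]
  constructor
  · intro h
    match p with
    | [] => exfalso; simp [pathSize] at h; omega
    | s :: q =>
      rw [pathSize_cons] at h
      cases s
      · exact Or.inl (Or.inl ⟨q, by simp [KStep.dx] at h; push_cast; omega, rfl⟩)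
      · exact Or.inl (Or.inr ⟨q, by simp [KStep.dx] at h; push_cast; omega, rfl⟩)
      · exact Or.inr (Or.inl ⟨q, by simp [KStep.dx] at h; push_cast; omega, rfl⟩)
      · exact Or.inr (Or.inr ⟨q, by simp [KStep.dx] at h; push_cast; omega, rfl⟩)
  · rintro ((⟨q, hq, rfl⟩ | ⟨q, hq, rfl⟩) | (⟨q, hq, rfl⟩ | ⟨q, hq, rfl⟩)) <;>
      rw [pathSize_cons, hq] <;> simp [KStep.dx] <;> push_cast <;> ring

lemma g_rec (n : ℕ) : g (n + 2) = 2 * g (n + 1) + 2 * g n := by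
  have hinj : ∀ s : KStep, Function.Injective (s :: · : List KStep → List KStep) := by
    intro s a b h; simpa using h
  have hd : ∀ (s t : KStep) (A B : Finset (List KStep)), s ≠ t →
      Disjoint (A.image (s :: ·)) (B.image (t :: ·)) := by
    intro s t A B hst
    rw [Finset.disjoint_left]
    rintro p hp hq
    simp only [Finset.mem_image] at hp hq
    obtain ⟨a, -, rfl⟩ := hp
    obtain ⟨b, -, hb⟩ := hq
    exact hst (by injection hb with h1 h2; exact h1.symm)
  rw [g, P_succ_succ]
  rw [Finset.card_union_of_disjoint, Finset.card_union_of_disjoint, Finset.card_union_of_disjoint]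
  · simp only [Finset.card_image_of_injective _ (hinj _), g]
    ring
  · exact hd _ _ _ _ (by simp)
  · exact hd _ _ _ _ (by simp)
  · rw [Finset.disjoint_union_left]
    constructor <;> rw [Finset.disjoint_union_right] <;>
      exact ⟨hd _ _ _ _ (by simp), hd _ _ _ _ (by simp)⟩

end KP

namespace Sym

def negS : KStep → KStep
  | .N => .Nb
  | .Nb => .N
  | .E => .Eb
  | .Eb => .E

lemma negS_invol (s : KStep) : negS (negS s) = s := by cases s <;> rfl

lemma dx_negS (s : KStep) : (negS s).dx = s.dx := by cases s <;> rfl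

lemma dy_negS (s : KStep) : (negS s).dy = -s.dy := by cases s <;> rfl

def negP (p : List KStep) : List KStep := p.map negS

lemma negP_invol (p : List KStep) : negP (negP p) = p := by
  have h : negS ∘ negS = id := funext negS_invol
  simp [negP, List.map_map, h]

lemma pathSize_negP (p : List KStep) : pathSize (negP p) = pathSize p := by
  have h : KStep.dx ∘ negS = KStep.dx := funext dx_negS
  simp [pathSize, negP, List.map_map, h]

lemma pathAlt_negP (p : List KStep) : pathAlt (negP p) = -pathAlt p := by
  induction p with
  | nil => simp [pathAlt, negP]
  | cons s q ih =>
    simp only [negP, List.map_cons] at ih ⊢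
    rw [KP.pathAlt_cons, dy_negS, KP.pathAlt_cons,
      show pathAlt (List.map negS q) = -pathAlt q from ih]
    ring

end Sym

open Sym

def Apos (n : ℕ) : Finset (List KStep) := (KP.P n).filter (fun p => 0 ≤ pathAlt p)
def Zed (n : ℕ) : Finset (List KStep) := (KP.P n).filter (fun p => pathAlt p = 0)

lemma two_A_eq (n : ℕ) : 2 * (Apos n).card = KP.g n + (Zed n).card := by
  classical
  set B : Finset (List KStep) := (KP.P n).filter (fun p => pathAlt p < 0) with hB
  set C : Finset (List KStep) := (KP.P n).filter (fun p => 0 < pathAlt p) with hC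
  have hsplit : (Apos n).card + B.card = KP.g n := by
    have h0 := Finset.card_filter_add_card_filter_not
      (s := KP.P n) (p := fun p => 0 ≤ pathAlt p)
    have h1 : (KP.P n).filter (fun a => ¬ 0 ≤ pathAlt a) = B := by
      rw [hB]
      apply Finset.filter_congr
      intro p _
      simp [not_le]
    rw [h1] at h0
    exact h0
  have hBC : B.card = C.card := by
    apply Finset.card_bij (fun p _ => negP p)
    · intro p hp
      rw [hB, Finset.mem_filter] at hp
      rw [hC, Finset.mem_filter, KP.mem_P, pathSize_negP, pathAlt_negP]
      rw [KP.mem_P] at hp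
      exact ⟨hp.1, by linarith [hp.2]⟩
    · intro p hp q hq h
      have := congrArg negP h
      rwa [negP_invol, negP_invol] at this
    · intro p hp
      rw [hC, Finset.mem_filter, KP.mem_P] at hp
      refine ⟨negP p, ?_, negP_invol p⟩
      rw [hB, Finset.mem_filter, KP.mem_P, pathSize_negP, pathAlt_negP]
      exact ⟨hp.1, by linarith [hp.2]⟩
  have hAC : (Apos n).card = C.card + (Zed n).card := by
    rw [Apos, Zed, hC]
    rw [← Finset.card_union_of_disjoint]
    · congr 1
      rw [← Finset.filter_or]
      apply Finset.filter_congr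
      intro p _
      constructor
      · intro h
        rcases lt_or_eq_of_le h with h | h
        · exact Or.inl h
        · exact Or.inr h.symm
      · rintro (h | h)
        · exact le_of_lt h
        · exact le_of_eq h.symm
    · rw [Finset.disjoint_left]
      intro p hp hq
      rw [Finset.mem_filter] at hp hq
      omega
  omega

namespace Fib

/-- count of positions in `range l.length` where predicate holds equals countP. -/
lemma card_filter_range {α : Type*} (pr : α → Prop) [DecidablePred pr] (d : α)
    (l : List α) :
    ((Finset.range l.length).filter (fun i => pr (l.getD i d))).card
      = l.countP (fun x => decide (pr x)) := by
  induction l with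
  | nil => simp
  | cons x xs ih =>
    rw [Finset.card_filter] at ih ⊢
    rw [List.length_cons, Finset.sum_range_succ']
    simp only [List.getD_cons_succ, List.getD_cons_zero]
    rw [ih, List.countP_cons]
    simp only [decide_eq_true_eq]

variable (b gs : KStep)

def uns (x : KStep) : KStep := if x = b then gs else x

def skel (p : List KStep) : List KStep := p.map (uns b gs)

def cntB (p : List KStep) : ℕ := p.countP (fun x => decide (x = b))
def cntG (p : List KStep) : ℕ := p.countP (fun x => decide (x = gs))

@[simp] lemma length_skel (p : List KStep) : (skel b gs p).length = p.length := by
  simp [skel]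

lemma pathSize_skel (hdx : b.dx = gs.dx) (p : List KStep) :
    pathSize (skel b gs p) = pathSize p := by
  induction p with
  | nil => rfl
  | cons x q ih =>
    simp only [skel, List.map_cons] at ih ⊢
    rw [KP.pathSize_cons, KP.pathSize_cons, show pathSize (q.map (uns b gs)) = pathSize q from ih]
    congr 1
    by_cases h : x = b <;> simp [uns, h, hdx]

lemma pathAlt_skel (hdy : b.dy = -gs.dy) (p : List KStep) :
    pathAlt (skel b gs p) = pathAlt p + 2 * gs.dy * (cntB b p) := by
  induction p with
  | nil => simp [pathAlt, skel, cntB]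
  | cons x q ih =>
    simp only [skel, List.map_cons] at ih ⊢
    rw [KP.pathAlt_cons, KP.pathAlt_cons, show pathAlt (q.map (uns b gs)) =
      pathAlt q + 2 * gs.dy * (cntB b q) from ih]
    simp only [cntB, List.countP_cons, decide_eq_true_eq]
    by_cases h : x = b
    · subst h
      simp only [uns, if_pos rfl, hdy]
      push_cast
      ring
    · simp only [uns, if_neg h]
      push_cast
      ring

def phi (p : List KStep) : Finset ℕ :=
  (Finset.range p.length).filter (fun i => p.getD i gs = b)

def Gpos (s : List KStep) : Finset ℕ :=
  (Finset.range s.length).filter (fun i => s.getD i b = gs)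

lemma card_phi (hbg : b ≠ gs) (p : List KStep) : (phi b gs p).card = cntB b p := by
  have := card_filter_range (fun x => x = b) gs p
  simpa [phi, cntB] using this

lemma card_Gpos (hbg : b ≠ gs) (s : List KStep) : (Gpos b gs s).card = cntG gs s := by
  have := card_filter_range (fun x => x = gs) b s
  simpa [Gpos, cntG] using this

lemma skel_getElem (p : List KStep) (i : ℕ) (h : i < p.length) :
    (skel b gs p)[i]'(by simpa using h) = uns b gs p[i] := by
  simp [skel]

lemma phi_inj (hbg : b ≠ gs) {p q : List KStep} (hs : skel b gs p = skel b gs q)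
    (hp : phi b gs p = phi b gs q) : p = q := by
  have hl : p.length = q.length := by
    have := congrArg List.length hs
    simpa using this
  apply List.ext_getElem hl
  intro i h1 h2
  have hu : uns b gs p[i] = uns b gs q[i] := by
    have := congrArg (fun l : List KStep => l.getD i gs) hs
    simp only [List.getD_eq_getElem _ _ (by simpa using h1 : i < (skel b gs p).length),
      List.getD_eq_getElem _ _ (by simpa using h2 : i < (skel b gs q).length)] at this
    rwa [skel_getElem b gs p i h1, skel_getElem b gs q i h2] at this
  have hphi : (i ∈ phi b gs p) ↔ (i ∈ phi b gs q) := by rw [hp]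
  simp only [phi, Finset.mem_filter, Finset.mem_range,
    List.getD_eq_getElem _ _ h1, List.getD_eq_getElem _ _ h2] at hphi
  by_cases hpb : p[i] = b
  · by_cases hqb : q[i] = b
    · rw [hpb, hqb]
    · exfalso; exact hqb ((hphi.mp ⟨h1, hpb⟩).2)
  · by_cases hqb : q[i] = b
    · exfalso; exact hpb ((hphi.mpr ⟨h2, hqb⟩).2)
    · rwa [uns, if_neg hpb, uns, if_neg hqb] at hu

lemma phi_subset (hbg : b ≠ gs) (p : List KStep) :
    phi b gs p ⊆ Gpos b gs (skel b gs p) := by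
  intro i hi
  simp only [phi, Finset.mem_filter, Finset.mem_range] at hi
  obtain ⟨h1, h2⟩ := hi
  simp only [Gpos, Finset.mem_filter, Finset.mem_range, length_skel]
  refine ⟨h1, ?_⟩
  rw [List.getD_eq_getElem _ _ (by simpa using h1), skel_getElem b gs p i h1]
  rw [List.getD_eq_getElem _ _ h1] at h2
  rw [h2, uns, if_pos rfl]

/-- upper bound on a fiber of `skel` consisting of altitude-0 paths. -/
lemma fiber_le (hdy : b.dy = -gs.dy) (hgs : gs.dy ≠ 0) (hbg : b ≠ gs)
    (s : List KStep) (F : Finset (List KStep))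
    (hF : ∀ p ∈ F, pathAlt p = 0 ∧ skel b gs p = s) :
    F.card ≤ (cntG gs s).choose (cntG gs s / 2) := by
  rcases Finset.eq_empty_or_nonempty F with rfl | ⟨p0, hp0⟩
  · simp
  have hcnt : ∀ p ∈ F, cntB b p = cntB b p0 := by
    intro p hp
    obtain ⟨ha, hsk⟩ := hF p hp
    obtain ⟨ha0, hsk0⟩ := hF p0 hp0
    have e1 := pathAlt_skel b gs hdy p
    have e2 := pathAlt_skel b gs hdy p0
    rw [hsk, ha] at e1
    rw [hsk0, ha0] at e2
    have : 2 * gs.dy * (cntB b p) = 2 * gs.dy * (cntB b p0) := by omega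
    have h2 : (cntB b p : ℤ) = cntB b p0 := by
      rcases mul_left_cancel₀ (a := 2 * gs.dy) (by simpa using hgs) this with h
      exact h
    exact_mod_cast h2
  set j := cntB b p0 with hj
  calc F.card ≤ ((Gpos b gs s).powersetCard j).card := by
        apply Finset.card_le_card_of_injOn (phi b gs)
        · intro p hp
          rw [Finset.mem_coe, Finset.mem_powersetCard]
          obtain ⟨-, hsk⟩ := hF p hp
          constructor
          · rw [← hsk]; exact phi_subset b gs hbg p
          · rw [card_phi b gs hbg, hcnt p hp]
        · intro p hp q hq h
          exact phi_inj b gs hbg ((hF p hp).2.trans (hF q hq).2.symm) h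
    _ = (cntG gs s).choose j := by
        rw [Finset.card_powersetCard, card_Gpos b gs hbg]
    _ ≤ (cntG gs s).choose (cntG gs s / 2) := Nat.choose_le_middle _ _

/-- s in the image of skel contains no b. -/
lemma skel_bfree (hbg : b ≠ gs) (p : List KStep) : ∀ x ∈ skel b gs p, x ≠ b := by
  intro x hx
  simp only [skel, List.mem_map] at hx
  obtain ⟨y, -, rfl⟩ := hx
  by_cases h : y = b <;> simp [uns, h, Ne.symm hbg]

def resign (s : List KStep) (T : Finset ℕ) : List KStep :=
  List.ofFn (fun i : Fin s.length => if s[i] = gs ∧ i.val ∈ T then b else s[i])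

lemma length_resign (s : List KStep) (T : Finset ℕ) : (resign b gs s T).length = s.length := by
  simp [resign]

lemma resign_getElem (s : List KStep) (T : Finset ℕ) (i : ℕ) (h : i < s.length) :
    (resign b gs s T)[i]'(by rw [length_resign]; exact h)
      = if s[i] = gs ∧ i ∈ T then b else s[i] := by
  simp [resign]

lemma skel_resign (hbg : b ≠ gs) (s : List KStep) (hs : ∀ x ∈ s, x ≠ b) (T : Finset ℕ) :
    skel b gs (resign b gs s T) = s := by
  apply List.ext_getElem (by simp [length_resign])
  intro i h1 h2
  rw [skel_getElem b gs _ i (by rw [length_resign]; exact h2), resign_getElem b gs s T i h2]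
  by_cases h : s[i] = gs ∧ i ∈ T
  · rw [if_pos h, uns, if_pos rfl, h.1]
  · rw [if_neg h, uns, if_neg (hs s[i] (List.getElem_mem h2))]

lemma full_fiber_ge (hdx : b.dx = gs.dx) (hbg : b ≠ gs) (n : ℕ) (s : List KStep)
    (hs : ∀ x ∈ s, x ≠ b) (hsn : s ∈ KP.P n) :
    2 ^ (cntG gs s) ≤ ((KP.P n).filter (fun p => skel b gs p = s)).card := by
  rw [← card_Gpos b gs hbg, ← Finset.card_powerset]
  apply Finset.card_le_card_of_injOn (resign b gs s)
  · intro T hT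
    rw [Finset.mem_coe, Finset.mem_powerset] at hT
    rw [Finset.mem_coe, Finset.mem_filter]
    have hsk := skel_resign b gs hbg s hs T
    constructor
    · rw [KP.mem_P]
      rw [← pathSize_skel b gs hdx (resign b gs s T), hsk]
      exact KP.mem_P.mp hsn
    · exact hsk
  · intro T1 hT1 T2 hT2 h
    rw [Finset.mem_coe, Finset.mem_powerset] at hT1 hT2
    have key : ∀ U V : Finset ℕ, U ⊆ Gpos b gs s →
        resign b gs s U = resign b gs s V → U ⊆ V := by
      intro U V hU he i hi
      have hG := hU hi
      simp only [Gpos, Finset.mem_filter, Finset.mem_range] at hG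
      obtain ⟨hil, hig⟩ := hG
      rw [List.getD_eq_getElem _ _ hil] at hig
      have e0 := congrArg (fun l : List KStep => l.getD i b) he
      simp only [List.getD_eq_getElem _ _ (show i < (resign b gs s U).length by
          rw [length_resign]; exact hil),
        List.getD_eq_getElem _ _ (show i < (resign b gs s V).length by
          rw [length_resign]; exact hil)] at e0
      have e := e0
      rw [resign_getElem b gs s U i hil, resign_getElem b gs s V i hil,
        if_pos ⟨hig, hi⟩] at e
      by_contra hi2
      rw [if_neg (by tauto)] at e
      exact hbg (e.trans hig)
    exact Finset.Subset.antisymm (key T1 T2 hT1 h) (key T2 T1 hT2 h.symm)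

end Fib


lemma cb_sqrt (m : ℕ) :
    (Nat.centralBinom m : ℝ) * Real.sqrt (3 * m + 1) ≤ 4 ^ m := by
  induction m with
  | zero => simp [Nat.centralBinom]
  | succ m ih =>
    have key : ((m : ℝ) + 1) * Nat.centralBinom (m + 1) =
        2 * (2 * m + 1) * Nat.centralBinom m := by
      exact_mod_cast congrArg (Nat.cast : ℕ → ℝ) (Nat.succ_mul_centralBinom_succ m)
    have hm1 : (0:ℝ) < (m:ℝ) + 1 := by positivity
    rw [← mul_le_mul_iff_right₀ hm1, ← mul_assoc, key]
    push_cast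
    have hsq : (2 * (2*(m:ℝ)+1)) * Real.sqrt (3 * ((m:ℝ)+1) + 1) ≤
        4 * ((m:ℝ) + 1) * Real.sqrt (3 * m + 1) := by
      rw [show (4 : ℝ) * ((m:ℝ)+1) = 2 * (2 * ((m:ℝ)+1)) by ring, mul_assoc, mul_assoc]
      apply mul_le_mul_of_nonneg_left _ (by norm_num)
      have h1 : ((2*(m:ℝ)+1)) * Real.sqrt (3 * ((m:ℝ)+1) + 1) =
          Real.sqrt ((2*(m:ℝ)+1)^2 * (3 * ((m:ℝ)+1) + 1)) := by
        rw [Real.sqrt_mul (by positivity), Real.sqrt_sq (by positivity)]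
      have h2 : (2 * ((m:ℝ)+1)) * Real.sqrt (3 * (m:ℝ) + 1) =
          Real.sqrt ((2 * ((m:ℝ)+1))^2 * (3 * (m:ℝ) + 1)) := by
        rw [Real.sqrt_mul (by positivity), Real.sqrt_sq (by positivity)]
      rw [h1, h2]
      apply Real.sqrt_le_sqrt
      nlinarith [sq_nonneg ((m:ℝ))]
    calc 2 * (2*(m:ℝ)+1) * Nat.centralBinom m * Real.sqrt (3 * ((m:ℝ)+1) + 1)
        = (Nat.centralBinom m : ℝ) * ((2 * (2*(m:ℝ)+1)) * Real.sqrt (3 * ((m:ℝ)+1) + 1)) := by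
          ring
      _ ≤ (Nat.centralBinom m : ℝ) * (4 * ((m:ℝ) + 1) * Real.sqrt (3 * (m:ℝ) + 1)) := by
          apply mul_le_mul_of_nonneg_left hsq (by positivity)
      _ = 4 * ((m:ℝ)+1) * ((Nat.centralBinom m : ℝ) * Real.sqrt (3*(m:ℝ)+1)) := by ring
      _ ≤ 4 * ((m:ℝ)+1) * 4 ^ m := by
          exact mul_le_mul_of_nonneg_left ih (by positivity)
      _ = ((m:ℝ)+1) * 4 ^ (m+1) := by ring

lemma mid_sqrt (a : ℕ) :
    (a.choose (a / 2) : ℝ) * Real.sqrt (a + 1) ≤ 2 * 2 ^ a := by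
  have two_pow : ∀ k : ℕ, ((4:ℝ)) ^ k = 2 ^ (2 * k) := by
    intro k
    rw [show (4:ℝ) = 2 ^ 2 by norm_num, ← pow_mul]
  rcases Nat.even_or_odd a with ⟨m, hm⟩ | ⟨m, hm⟩
  · subst hm
    have h2 : (m + m) / 2 = m := by omega
    rw [h2]
    have hc : (m + m).choose m = Nat.centralBinom m := by
      rw [Nat.centralBinom]; congr 1; omega
    rw [hc]
    have step1 : (Nat.centralBinom m : ℝ) * Real.sqrt ((m:ℝ) + m + 1)
        ≤ (Nat.centralBinom m : ℝ) * Real.sqrt (3 * (m:ℝ) + 1) := by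
      apply mul_le_mul_of_nonneg_left _ (by positivity)
      apply Real.sqrt_le_sqrt; linarith
    have step2 := cb_sqrt m
    have : ((m:ℝ) + m + 1) = ((m + m : ℕ) : ℝ) + 1 := by push_cast; ring
    rw [← this] at *
    calc (Nat.centralBinom m : ℝ) * Real.sqrt ((m:ℝ) + m + 1)
        ≤ (4:ℝ) ^ m := le_trans step1 step2
      _ = 2 ^ (2 * m) := two_pow m
      _ ≤ 2 * 2 ^ (m + m) := by
          rw [show m + m = 2 * m by ring]
          nlinarith [pow_pos (show (0:ℝ) < 2 by norm_num) (2*m)]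
  · subst hm
    have h2 : (2 * m + 1) / 2 = m := by omega
    rw [h2]
    have hcb : ((2 * m + 1).choose m : ℝ) ≤ 2 * Nat.centralBinom m := by
      have h3 : (2 * m + 1).choose m ≤ 2 * Nat.centralBinom m := by
        rcases Nat.eq_zero_or_pos m with rfl | hm0
        · simp [Nat.centralBinom]
        · have hm1 : m - 1 + 1 = m := by omega
          have pas := Nat.choose_succ_succ (2*m) (m-1)
          simp only [Nat.succ_eq_add_one, hm1] at pas
          have e1 : (2*m).choose (m-1) ≤ Nat.centralBinom m := by
            have h := Nat.choose_le_middle (m-1) (2*m)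
            rw [show (2*m)/2 = m by omega] at h
            exact h
          have e2 : (2*m).choose m = Nat.centralBinom m := rfl
          omega
      exact_mod_cast Nat.cast_le.mpr h3
    have hs : Real.sqrt ((2*m+1 : ℕ) + 1) ≤ 2 * Real.sqrt (3 * (m:ℝ) + 1) := by
      rw [show (2:ℝ) * Real.sqrt (3 * (m:ℝ) + 1) =
        Real.sqrt (2^2 * (3 * (m:ℝ) + 1)) by
          rw [Real.sqrt_mul (by positivity), Real.sqrt_sq (by positivity)]]
      apply Real.sqrt_le_sqrt
      push_cast; nlinarith [Nat.cast_nonneg (α := ℝ) m]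
    calc ((2*m+1).choose m : ℝ) * Real.sqrt ((2*m+1 : ℕ) + 1)
        ≤ (2 * Nat.centralBinom m) * (2 * Real.sqrt (3 * (m:ℝ) + 1)) := by
          apply mul_le_mul hcb hs (Real.sqrt_nonneg _) (by positivity)
      _ = 4 * ((Nat.centralBinom m : ℝ) * Real.sqrt (3 * (m:ℝ) + 1)) := by ring
      _ ≤ 4 * 4 ^ m := by
          apply mul_le_mul_of_nonneg_left (cb_sqrt m) (by norm_num)
      _ = 2 * 2 ^ (2*m+1) := by
          rw [two_pow m]; ring

namespace Fib

def cntW (w : KStep → Prop) [DecidablePred w] (p : List KStep) : ℕ :=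
  p.countP (fun x => decide (w x))

variable (b gs : KStep)

lemma cntW_skel (w : KStep → Prop) [DecidablePred w] (hwb : w b) (hwg : w gs)
    (p : List KStep) : cntW w (skel b gs p) = cntW w p := by
  rw [cntW, skel, List.countP_map]
  apply List.countP_congr
  intro x _
  simp only [Function.comp_apply, decide_eq_true_eq, cntW]
  by_cases h : x = b
  · subst h; simp [uns, hwb, hwg]
  · simp [uns, h]

lemma cntG_eq_cntW (w : KStep → Prop) [DecidablePred w]
    (hw : ∀ x, x ≠ b → (w x ↔ x = gs)) (s : List KStep) (hs : ∀ x ∈ s, x ≠ b) :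
    cntG gs s = cntW w s := by
  rw [cntG, cntW]
  apply List.countP_congr
  intro x hx
  simp only [decide_eq_true_eq]
  exact (hw x (hs x hx)).symm

lemma z_half_bound (w : KStep → Prop) [DecidablePred w]
    (hdx : b.dx = gs.dx) (hdy : b.dy = -gs.dy) (hgs : gs.dy ≠ 0) (hbg : b ≠ gs)
    (hwb : w b) (hwg : w gs) (hw : ∀ x, x ≠ b → (w x ↔ x = gs)) (n : ℕ) :
    ((((Zed n).filter (fun p => n ≤ 4 * cntW w p)).card : ℝ) * Real.sqrt n
      ≤ 4 * KP.g n) := by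
  classical
  set Zw := (Zed n).filter (fun p => n ≤ 4 * cntW w p) with hZw
  set I := Zw.image (skel b gs) with hI
  have hfib : Zw.card = ∑ s ∈ I, (Zw.filter (fun p => skel b gs p = s)).card :=
    Finset.card_eq_sum_card_fiberwise (fun p hp => Finset.mem_image_of_mem _ hp)
  have hper : ∀ s ∈ I, ((Zw.filter (fun p => skel b gs p = s)).card : ℝ) * Real.sqrt n
      ≤ 4 * ((KP.P n).filter (fun p => skel b gs p = s)).card := by
    intro s hsI
    obtain ⟨p0, hp0, hsk0⟩ := Finset.mem_image.mp hsI
    have hp0' := Finset.mem_filter.mp hp0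
    have hp0Z : p0 ∈ Zed n := hp0'.1
    have hp0w : n ≤ 4 * cntW w p0 := hp0'.2
    have hp0Z' := Finset.mem_filter.mp hp0Z
    have hbfree : ∀ x ∈ s, x ≠ b := hsk0 ▸ skel_bfree b gs hbg p0
    have hsP : s ∈ KP.P n := by
      rw [KP.mem_P, ← hsk0, pathSize_skel b gs hdx]
      exact KP.mem_P.mp hp0Z'.1
    set A := cntG gs s with hA
    have hAw : A = cntW w p0 := by
      rw [hA, cntG_eq_cntW b gs w hw s hbfree, ← hsk0, cntW_skel b gs w hwb hwg]
    have h4A : n ≤ 4 * A := by rw [hAw]; exact hp0w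
    have h1 : (Zw.filter (fun p => skel b gs p = s)).card ≤ A.choose (A / 2) := by
      apply fiber_le b gs hdy hgs hbg s
      intro p hp
      rw [Finset.mem_filter] at hp
      obtain ⟨hpZw, hps⟩ := hp
      rw [hZw, Finset.mem_filter] at hpZw
      have hAlt := (Finset.mem_filter.mp hpZw.1).2
      exact ⟨hAlt, hps⟩
    have h2 : 2 ^ A ≤ ((KP.P n).filter (fun p => skel b gs p = s)).card :=
      full_fiber_ge b gs hdx hbg n s hbfree hsP
    have hsn : Real.sqrt n ≤ 2 * Real.sqrt ((A : ℝ) + 1) := by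
      rw [show (2:ℝ) * Real.sqrt ((A:ℝ)+1) = Real.sqrt (2^2 * ((A:ℝ)+1)) by
        rw [Real.sqrt_mul (by positivity), Real.sqrt_sq (by positivity)]]
      apply Real.sqrt_le_sqrt
      have : (n : ℝ) ≤ 4 * A := by exact_mod_cast h4A
      nlinarith
    calc ((Zw.filter (fun p => skel b gs p = s)).card : ℝ) * Real.sqrt n
        ≤ (A.choose (A / 2) : ℝ) * (2 * Real.sqrt ((A:ℝ)+1)) := by
          apply mul_le_mul _ hsn (Real.sqrt_nonneg _) (by positivity)
          exact_mod_cast h1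
      _ = 2 * ((A.choose (A / 2) : ℝ) * Real.sqrt ((A:ℝ)+1)) := by ring
      _ ≤ 2 * (2 * 2 ^ A) := by
          apply mul_le_mul_of_nonneg_left _ (by norm_num)
          exact_mod_cast mid_sqrt A
      _ = 4 * ((2:ℝ) ^ A) := by ring
      _ ≤ 4 * ((KP.P n).filter (fun p => skel b gs p = s)).card := by
          apply mul_le_mul_of_nonneg_left _ (by norm_num)
          exact_mod_cast h2
  have hQ : ∑ s ∈ I, ((KP.P n).filter (fun p => skel b gs p = s)).card ≤ KP.g n := by
    classical
    set Q := (KP.P n).filter (fun p => skel b gs p ∈ I) with hQdef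
    have e1 : Q.card = ∑ s ∈ I, (Q.filter (fun p => skel b gs p = s)).card :=
      Finset.card_eq_sum_card_fiberwise (fun p hp => (Finset.mem_filter.mp hp).2)
    have e2 : ∀ s ∈ I, Q.filter (fun p => skel b gs p = s)
        = (KP.P n).filter (fun p => skel b gs p = s) := by
      intro s hs
      rw [hQdef, Finset.filter_filter]
      apply Finset.filter_congr
      intro p _
      constructor
      · rintro ⟨-, h2⟩; exact h2
      · intro h2; exact ⟨h2 ▸ hs, h2⟩
    calc ∑ s ∈ I, ((KP.P n).filter (fun p => skel b gs p = s)).card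
        = ∑ s ∈ I, (Q.filter (fun p => skel b gs p = s)).card := by
          apply Finset.sum_congr rfl
          intro s hs
          rw [e2 s hs]
      _ = Q.card := e1.symm
      _ ≤ KP.g n := Finset.card_le_card (Finset.filter_subset _ _)
  calc (Zw.card : ℝ) * Real.sqrt n
      = ∑ s ∈ I, ((Zw.filter (fun p => skel b gs p = s)).card : ℝ) * Real.sqrt n := by
        rw [hfib]
        push_cast
        rw [Finset.sum_mul]
    _ ≤ ∑ s ∈ I, 4 * (((KP.P n).filter (fun p => skel b gs p = s)).card : ℝ) :=
        Finset.sum_le_sum hper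
    _ = 4 * ((∑ s ∈ I, ((KP.P n).filter (fun p => skel b gs p = s)).card : ℕ) : ℝ) := by
        rw [← Finset.mul_sum]
        push_cast
        ring
    _ ≤ 4 * KP.g n := by
        apply mul_le_mul_of_nonneg_left _ (by norm_num)
        exact_mod_cast hQ

lemma cnt_dx_sum (p : List KStep) :
    (cntW (fun x => x.dx = 1) p : ℤ) + 2 * cntW (fun x => x.dx = 2) p = pathSize p := by
  induction p with
  | nil => simp [cntW, pathSize]
  | cons x q ih =>
    rw [KP.pathSize_cons, ← ih]
    simp only [cntW, List.countP_cons, decide_eq_true_eq]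
    cases x <;> simp [KStep.dx] <;> push_cast <;> ring

lemma z_bound (n : ℕ) : ((Zed n).card : ℝ) * Real.sqrt n ≤ 8 * KP.g n := by
  classical
  have hN := z_half_bound KStep.Nb KStep.N (fun x => x.dx = 1)
    (by rfl) (by simp [KStep.dy]) (by simp [KStep.dy]) (by simp)
    (by simp [KStep.dx]) (by simp [KStep.dx])
    (by intro x hx; cases x <;> simp_all [KStep.dx]) n
  have hE := z_half_bound KStep.Eb KStep.E (fun x => x.dx = 2)
    (by rfl) (by simp [KStep.dy]) (by simp [KStep.dy]) (by simp)
    (by simp [KStep.dx]) (by simp [KStep.dx])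
    (by intro x hx; cases x <;> simp_all [KStep.dx]) n
  have hsplit : (Zed n).card ≤
      ((Zed n).filter (fun p => n ≤ 4 * cntW (fun x => x.dx = 1) p)).card +
      ((Zed n).filter (fun p => n ≤ 4 * cntW (fun x => x.dx = 2) p)).card := by
    have h0 := Finset.card_filter_add_card_filter_not
      (s := Zed n) (p := fun p => n ≤ 4 * cntW (fun x => x.dx = 1) p)
    have hsub : (Zed n).filter (fun p => ¬ n ≤ 4 * cntW (fun x => x.dx = 1) p) ⊆
        (Zed n).filter (fun p => n ≤ 4 * cntW (fun x => x.dx = 2) p) := by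
      intro p hp
      rw [Finset.mem_filter] at hp ⊢
      refine ⟨hp.1, ?_⟩
      have h1 := cnt_dx_sum p
      have h2 : pathSize p = (n : ℤ) := KP.mem_P.mp (Finset.mem_filter.mp hp.1).1
      have h3 := hp.2
      rw [h2] at h1
      omega
    have := Finset.card_le_card hsub
    omega
  have h1 : (0:ℝ) ≤ Real.sqrt n := Real.sqrt_nonneg _
  calc ((Zed n).card : ℝ) * Real.sqrt n
      ≤ ((((Zed n).filter (fun p => n ≤ 4 * cntW (fun x => x.dx = 1) p)).card : ℝ) +
         (((Zed n).filter (fun p => n ≤ 4 * cntW (fun x => x.dx = 2) p)).card : ℝ))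
          * Real.sqrt n := by
        apply mul_le_mul_of_nonneg_right _ h1
        exact_mod_cast hsplit
    _ = (((Zed n).filter (fun p => n ≤ 4 * cntW (fun x => x.dx = 1) p)).card : ℝ)
          * Real.sqrt n +
        (((Zed n).filter (fun p => n ≤ 4 * cntW (fun x => x.dx = 2) p)).card : ℝ)
          * Real.sqrt n := by ring
    _ ≤ 4 * KP.g n + 4 * KP.g n := add_le_add hN hE
    _ = 8 * KP.g n := by ring

end Fib

section Asymp

noncomputable def s3 : ℝ := Real.sqrt 3

lemma s3_sq : s3 ^ 2 = 3 := Real.sq_sqrt (by norm_num)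

lemma s3_pos : 0 < s3 := Real.sqrt_pos.mpr (by norm_num)

lemma s3_lt_two : s3 < 2 := by nlinarith [s3_sq, s3_pos]

lemma s3_gt_one : 1 < s3 := by nlinarith [s3_sq, s3_pos]

lemma g_formula (n : ℕ) :
    (KP.g n : ℝ) = (3+s3)/6 * (1+s3)^n + (3-s3)/6 * (1-s3)^n := by
  have key : ∀ n, ((KP.g n : ℝ) = (3+s3)/6 * (1+s3)^n + (3-s3)/6 * (1-s3)^n) ∧
      ((KP.g (n+1) : ℝ) = (3+s3)/6 * (1+s3)^(n+1) + (3-s3)/6 * (1-s3)^(n+1)) := by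
    intro n
    induction n with
    | zero =>
      constructor
      · rw [KP.g_zero]; push_cast; ring
      · rw [KP.g_one]; push_cast; simp only [pow_one]
        linear_combination (-1/3 : ℝ) * s3_sq
    | succ m ih =>
      refine ⟨ih.2, ?_⟩
      have hrec : (KP.g (m+2) : ℝ) = 2 * KP.g (m+1) + 2 * KP.g m := by
        exact_mod_cast congrArg (Nat.cast : ℕ → ℝ) (KP.g_rec m)
      rw [hrec, ih.1, ih.2]
      linear_combination (-((3+s3)/6*(1+s3)^m + (3-s3)/6*(1-s3)^m)) * s3_sq
  exact (key n).1

lemma tendsto_g :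
    Filter.Tendsto (fun n => (KP.g n : ℝ) / (1+s3)^n) Filter.atTop (nhds ((3+s3)/6)) := by
  have hα : (0:ℝ) < 1 + s3 := by have := s3_pos; linarith
  have hα' : (1:ℝ) + s3 ≠ 0 := ne_of_gt hα
  have h1 : ∀ n : ℕ, (KP.g n : ℝ) / (1+s3)^n
      = (3+s3)/6 + (3-s3)/6 * ((1-s3)/(1+s3))^n := by
    intro n
    rw [g_formula, div_pow]
    field_simp
  have h2 : |(1-s3)/(1+s3)| < 1 := by
    rw [abs_div, abs_of_pos hα, div_lt_one hα]
    rw [abs_lt]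
    constructor
    · nlinarith [s3_pos]
    · nlinarith [s3_pos]
  have h3 := tendsto_pow_atTop_nhds_zero_of_abs_lt_one h2
  have h4 : Filter.Tendsto (fun n : ℕ => (3+s3)/6 + (3-s3)/6 * ((1-s3)/(1+s3))^n)
      Filter.atTop (nhds ((3+s3)/6 + (3-s3)/6 * 0)) :=
    Filter.Tendsto.add tendsto_const_nhds (Filter.Tendsto.const_mul _ h3)
  rw [mul_zero, add_zero] at h4
  exact h4.congr (fun n => (h1 n).symm)

lemma tendsto_z :
    Filter.Tendsto (fun n => ((Zed n).card : ℝ) / (1+s3)^n) Filter.atTop (nhds 0) := by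
  have hα : (0:ℝ) < 1 + s3 := by have := s3_pos; linarith
  have hsqrt : Filter.Tendsto (fun n : ℕ => Real.sqrt n) Filter.atTop Filter.atTop := by
    apply Filter.tendsto_atTop_atTop.mpr
    intro b
    refine ⟨⌈b^2⌉₊, fun n hn => ?_⟩
    rcases le_or_gt b 0 with hb | hb
    · exact hb.trans (Real.sqrt_nonneg _)
    · rw [show b = Real.sqrt (b^2) by rw [Real.sqrt_sq hb.le]]
      apply Real.sqrt_le_sqrt
      calc b^2 ≤ (⌈b^2⌉₊ : ℝ) := Nat.le_ceil _
        _ ≤ n := by exact_mod_cast hn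
  have hup : Filter.Tendsto
      (fun n : ℕ => (8 / Real.sqrt n) * ((KP.g n : ℝ) / (1+s3)^n))
      Filter.atTop (nhds (0 * ((3+s3)/6))) := by
    apply Filter.Tendsto.mul _ tendsto_g
    exact Filter.Tendsto.div_atTop tendsto_const_nhds hsqrt
  rw [zero_mul] at hup
  apply tendsto_of_tendsto_of_tendsto_of_le_of_le' tendsto_const_nhds hup
  · filter_upwards with n
    positivity
  · filter_upwards [Filter.eventually_ge_atTop 1] with n hn
    have hsn : (0:ℝ) < Real.sqrt n := Real.sqrt_pos.mpr (by exact_mod_cast hn)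
    have hb := Fib.z_bound n
    have hz : ((Zed n).card : ℝ) ≤ 8 * KP.g n / Real.sqrt n := by
      rw [le_div_iff₀ hsn]
      exact hb
    calc ((Zed n).card : ℝ) / (1+s3)^n ≤ (8 * KP.g n / Real.sqrt n) / (1+s3)^n := by
          gcongr
      _ = (8 / Real.sqrt n) * ((KP.g n : ℝ) / (1+s3)^n) := by
          field_simp

end Asymp


theorem stmt2 (t : ℕ → ℕ)
    (ht : ∀ n : ℕ, t n =
      Nat.card {p : List KStep // pathSize p = (n : ℤ) ∧ 0 ≤ pathAlt p}) :
    Tendsto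
      (fun n : ℕ =>
        (t n : ℝ) / (Real.sqrt 3 / 12 * (1 + Real.sqrt 3) ^ (n + 1)))
      atTop (𝓝 1) := by
  have hα : (0:ℝ) < 1 + s3 := by have := s3_pos; linarith
  have htA : ∀ n, t n = (Apos n).card := by
    intro n
    rw [ht n]
    have e : {p : List KStep // pathSize p = (n : ℤ) ∧ 0 ≤ pathAlt p} ≃ {p // p ∈ Apos n} :=
      Equiv.subtypeEquivRight (by
        intro p
        simp only [Apos, Finset.mem_filter, KP.mem_P])
    rw [Nat.card_congr e, Nat.card_eq_finsetCard]
  have ht2 : ∀ n, (t n : ℝ) = ((KP.g n : ℝ) + (Zed n).card) / 2 := by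
    intro n
    have h := two_A_eq n
    rw [htA n]
    have h2 : (2 * (Apos n).card : ℝ) = (KP.g n : ℝ) + (Zed n).card := by
      exact_mod_cast congrArg (Nat.cast : ℕ → ℝ) h
    push_cast at h2 ⊢
    linarith
  have hmain : Tendsto (fun n : ℕ => (t n : ℝ) / (1+s3)^n) atTop (𝓝 ((3+s3)/12)) := by
    have h := (tendsto_g.add tendsto_z).div_const 2
    rw [add_zero] at h
    have he : ∀ n : ℕ, ((KP.g n : ℝ)/(1+s3)^n + ((Zed n).card : ℝ)/(1+s3)^n)/2
        = (t n : ℝ) / (1+s3)^n := by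
      intro n
      rw [ht2 n]
      ring
    have heq : (3+s3)/6/2 = (3+s3)/12 := by ring
    rw [heq] at h
    exact h.congr he
  have hconst : ((3+s3)/12) * (12 / (s3 * (1+s3))) = 1 := by
    have h1 := s3_sq
    have h2 := s3_pos
    field_simp
    nlinarith
  have hfinal := hmain.mul_const (12 / (s3 * (1+s3)))
  rw [hconst] at hfinal
  apply hfinal.congr
  intro n
  have hs3 : Real.sqrt 3 = s3 := rfl
  rw [hs3]
  have hαn : ((1+s3):ℝ)^n ≠ 0 := pow_ne_zero _ (ne_of_gt hα)
  have hss : s3 ≠ 0 := ne_of_gt s3_pos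
  rw [pow_succ]
  have h1 : ((1+s3)^n * (s3*(1+s3))) ≠ 0 :=
    mul_ne_zero hαn (mul_ne_zero hss (ne_of_gt hα))
  have h2 : (s3/12 * ((1+s3)^n*(1+s3))) ≠ 0 :=
    mul_ne_zero (div_ne_zero hss (by norm_num)) (mul_ne_zero hαn (ne_of_gt hα))
  rw [div_mul_div_comm, div_eq_div_iff h1 h2]
  ring
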